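/- Fix ρ > 0 and τ > 0 with τ = ρσ. Then the function d₁ ↦ f(d₁,N₂;ρ,τ) is constant on the interval [0, g(0,0,N₁;ρ)], with value (1/σ)·B(0,0;τ/σ) = (φD/σ)·(1 + (τ/σ)·φD/T). -/

import Mathlib

/-- `B(d,N;ρ)` with parameters `σ φ D T`. -/
noncomputable def B (σ φ D T ρ N d : ℝ) : ℝ :=
  φ * D * (1 + ρ * φ * D / T) - σ * N * d - ρ * σ ^ 2 * N * d ^ 2

/-- `g(d,N',N;ρ)` with parameters `σ φ D T`. -/
noncomputable def g (σ φ D T ρ N' N d : ℝ) : ℝ :=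
  (-1 + Real.sqrt (1 + (4 * ρ / N) * B σ φ D T ρ N' d)) / (2 * σ * ρ)

/-- `f(d₁,N₂;ρ,τ)` with parameters `σ φ D T` and `N₁`. -/
noncomputable def f (σ φ D T ρ τ N₁ N₂ d₁ : ℝ) : ℝ :=
  N₁ * d₁ + N₂ * g σ φ D T ρ N₁ N₂ d₁ +
    τ * (N₁ * d₁ ^ 2 + N₂ * (g σ φ D T ρ N₁ N₂ d₁) ^ 2)

/-!
With `τ = ρσ`, `σ f = N₁ q(d₁) + N₂ q(g)` for `q(x) = σx + ρσ²x²`. By construction `g(d,N',N;ρ)` is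
the nonnegative root of `N q(x) = B(d,N';ρ)`, and `B(d,N';ρ) = B(0,0;ρ) - N' q(d)`, so
`σ f = N₁ q(d₁) + B(d₁,N₁;ρ) = B(0,0;ρ)` whenever the square root is taken of a nonnegative number,
which is the case for `0 ≤ d₁ ≤ g(0,0,N₁;ρ)` because `q` is increasing on `[0, ∞)`.
-/

section

variable {σ φ D T ρ : ℝ}

lemma B_zero_zero : B σ φ D T ρ 0 0 = φ * D * (1 + ρ * φ * D / T) := by
  simp [B]

lemma B_eq_B_zero_zero_sub (N' d : ℝ) :
    B σ φ D T ρ N' d = B σ φ D T ρ 0 0 - N' * (σ * d + ρ * σ ^ 2 * d ^ 2) := by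
  simp only [B]
  ring

lemma B_zero_zero_nonneg (hφ : 0 < φ) (hD : 0 < D) (hT : 0 < T) (hρ : 0 < ρ) :
    0 ≤ B σ φ D T ρ 0 0 := by
  rw [B_zero_zero]
  positivity

lemma g_spec (N' N d : ℝ) (hσ : σ ≠ 0) (hρ : ρ ≠ 0) (hN : N ≠ 0)
    (hdisc : 0 ≤ 1 + (4 * ρ / N) * B σ φ D T ρ N' d) :
    N * (σ * g σ φ D T ρ N' N d + ρ * σ ^ 2 * g σ φ D T ρ N' N d ^ 2) = B σ φ D T ρ N' d := by
  have hsq := Real.sq_sqrt hdisc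
  unfold g
  generalize Real.sqrt (1 + (4 * ρ / N) * B σ φ D T ρ N' d) = s at hsq ⊢
  field_simp at hsq ⊢
  linear_combination hsq

lemma B_nonneg_of_mem_Icc (hσ : 0 < σ) (hρ : 0 < ρ) {N d : ℝ} (hN : 0 < N)
    (hB : 0 ≤ B σ φ D T ρ 0 0) (hd : d ∈ Set.Icc 0 (g σ φ D T ρ 0 N 0)) :
    0 ≤ B σ φ D T ρ N d := by
  obtain ⟨hd₀, hdg⟩ := hd
  have hg := g_spec 0 N 0 hσ.ne' hρ.ne' hN.ne' (by positivity)
  have hq : σ * d + ρ * σ ^ 2 * d ^ 2 ≤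
      σ * g σ φ D T ρ 0 N 0 + ρ * σ ^ 2 * g σ φ D T ρ 0 N 0 ^ 2 := by
    gcongr
  rw [B_eq_B_zero_zero_sub, ← hg]
  nlinarith

end

theorem stmt_6_general (σ φ D T : ℝ) (hσ : 0 < σ) (hφ : 0 < φ) (hD : 0 < D) (hT : 0 < T)
    (N₁ N₂ : ℕ) (hN₁ : 0 < N₁) (hN₂ : 0 < N₂)
    (ρ τ : ℝ) (hρ : 0 < ρ) (hτρ : τ = ρ * σ) :
    (∀ d₁ ∈ Set.Icc 0 (g σ φ D T ρ 0 N₁ 0),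
      f σ φ D T ρ τ N₁ N₂ d₁ = (1 / σ) * B σ φ D T (τ / σ) 0 0) ∧
    (1 / σ) * B σ φ D T (τ / σ) 0 0 = (φ * D / σ) * (1 + (τ / σ) * φ * D / T) := by
  have hτσ : τ / σ = ρ := by rw [hτρ, mul_div_cancel_right₀ _ hσ.ne']
  have hN₁' : (0 : ℝ) < N₁ := Nat.cast_pos.mpr hN₁
  have hN₂' : (0 : ℝ) < N₂ := Nat.cast_pos.mpr hN₂
  refine ⟨fun d₁ hd₁ => ?_, by rw [B_zero_zero]; ring⟩
  have hB₁ := B_nonneg_of_mem_Icc hσ hρ hN₁' (B_zero_zero_nonneg hφ hD hT hρ) hd₁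
  have hg := g_spec N₁ N₂ d₁ hσ.ne' hρ.ne' hN₂'.ne' (by positivity)
  have hB := B_eq_B_zero_zero_sub (σ := σ) (φ := φ) (D := D) (T := T) (ρ := ρ) N₁ d₁
  rw [hτσ, one_div_mul_eq_div, eq_div_iff hσ.ne', f, hτρ]
  linear_combination hg + hB

/-- if `τ = ρσ` then `f(·,N₂;ρ,τ)` is constant on `[0, g(0,0,N₁;ρ)]`,
with value `(1/σ)·B(0,0;τ/σ) = (φD/σ)(1 + (τ/σ)φD/T)`. -/
theorem stmt_6 (σ φ D T : ℝ) (hσ : 0 < σ) (hφ : 0 < φ) (hD : 0 < D) (hT : 0 < T)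
    (N₁ N₂ : ℕ) (hN₁ : 0 < N₁) (hN₂ : 0 < N₂)
    (ρ τ : ℝ) (hρ : 0 < ρ) (hτ : 0 < τ) (hτρ : τ = ρ * σ) :
    (∀ d₁ ∈ Set.Icc 0 (g σ φ D T ρ 0 N₁ 0),
      f σ φ D T ρ τ N₁ N₂ d₁ = (1 / σ) * B σ φ D T (τ / σ) 0 0) ∧
    (1 / σ) * B σ φ D T (τ / σ) 0 0 = (φ * D / σ) * (1 + (τ / σ) * φ * D / T) :=
  stmt_6_general σ φ D T hσ hφ hD hT N₁ N₂ hN₁ hN₂ ρ τ hρ hτρ
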